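/- Let d be a positive squarefree integer with d ≡ 3 (mod 4), set ω_d = (1+i√d)/2 and O_d = ℤ + ℤ·ω_d. Let m, n ∈ ℤ, β = m + n·ω_d, and t ∈ ℝ. Then all entries of the Heisenberg translation matrix T(β,t) lie in O_d if and only if there exists s ∈ ℤ with t = s·√d and s ≡ m² + mn + n²(d+1)/4 (mod 2). In particular, for every β ∈ O_d there exists t ∈ ℝ such that T(β,t) has all entries in O_d (every translation of Isom(O_d) lifts to the stabiliser of q∞), and T(0,t) has all entries in O_d if and only if t ∈ 2√d·ℤ. -/

import Mathlib

noncomputable section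

open Complex

/-- The Heisenberg translation matrix `T(β,t)`, with rows
`(1, −conj β, (−|β|² + i t)/2)`, `(0, 1, β)`, `(0, 0, 1)`. -/
def Tmat (β : ℂ) (t : ℝ) : Matrix (Fin 3) (Fin 3) ℂ :=
  !![1, -((starRingEnd ℂ) β), ((-((‖β‖ ^ 2 : ℝ) : ℂ)) + Complex.I * (t : ℝ))/2;
     0, 1, β;
     0, 0, 1]

/-- `ω_d = (1 + i√d)/2`. -/
def ωd (d : ℕ) : ℂ := (1 + Complex.I * ((√(d : ℝ)) : ℝ)) / 2

/-- The ring `O_d = ℤ + ℤ·ω_d`, as a subset of `ℂ`. -/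
def Od (d : ℕ) : Set ℂ := {z | ∃ a b : ℤ, z = (a : ℂ) + (b : ℂ) * ωd d}

/-! Since `|m + n ω_d|² = m² + mn + n²(d+1)/4 =: N` is an integer, the only entry of `T(β,t)`
that can fail to lie in `O_d` is the corner `(−N + i t)/2`. Writing an element of `O_d` as
`a + b ω_d = (a + b/2) + i b √d/2`, the corner lies in `O_d` iff `t = b √d` for an integer `b`
with `−N = 2a + b`, i.e. `b ≡ N (mod 2)`. -/

section

variable {d : ℕ}

@[simp]
lemma ωd_re : (ωd d).re = 1 / 2 := by
  simp [ωd]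

@[simp]
lemma ωd_im : (ωd d).im = √(d : ℝ) / 2 := by
  simp [ωd]

lemma conj_ωd : (starRingEnd ℂ) (ωd d) = 1 - ωd d := by
  unfold ωd
  rw [map_div₀, map_add, map_one, map_mul, Complex.conj_I, Complex.conj_ofReal, map_ofNat]
  ring

lemma intCast_mem_Od (a : ℤ) : (a : ℂ) ∈ Od d :=
  ⟨a, 0, by simp⟩

lemma neg_conj_mem_Od {z : ℂ} (hz : z ∈ Od d) : -(starRingEnd ℂ) z ∈ Od d := by
  obtain ⟨a, b, rfl⟩ := hz
  refine ⟨-(a + b), b, ?_⟩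
  simp only [map_add, map_mul, map_intCast, conj_ωd]
  push_cast
  ring

lemma mem_Od_iff_re_im {z : ℂ} :
    z ∈ Od d ↔ ∃ a b : ℤ, z.re = a + b / 2 ∧ z.im = b * (√(d : ℝ) / 2) := by
  constructor
  · rintro ⟨a, b, rfl⟩
    exact ⟨a, b, by simp; ring, by simp⟩
  · rintro ⟨a, b, hre, him⟩
    refine ⟨a, b, Complex.ext ?_ ?_⟩
    · simp [hre]
      ring
    · simp [him]

lemma half_corner_mem_Od_iff (N : ℤ) (t : ℝ) :
    (-(N : ℂ) + Complex.I * t) / 2 ∈ Od d ↔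
      ∃ s : ℤ, t = s * √(d : ℝ) ∧ s ≡ N [ZMOD 2] := by
  simp only [mem_Od_iff_re_im, Int.modEq_iff_dvd]
  constructor
  · rintro ⟨a, b, hre, him⟩
    have hN : -N = 2 * a + b := by
      have : -(N : ℝ) = 2 * a + b := by simp at hre; linarith
      exact_mod_cast this
    exact ⟨b, by simp at him; linarith, -a - b, by linarith⟩
  · rintro ⟨s, rfl, c, hc⟩
    have hN : (N : ℝ) = 2 * c + s := by exact_mod_cast (by linarith : N = 2 * c + s)
    exact ⟨-(c + s), s, by simp; linarith, by simp; ring⟩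

lemma norm_sq_intCast_add_intCast_mul_ωd (hd : d % 4 = 3) (m n : ℤ) :
    ‖(m : ℂ) + n * ωd d‖ ^ 2 = ((m ^ 2 + m * n + n ^ 2 * (((d : ℤ) + 1) / 4) : ℤ) : ℝ) := by
  have hquarter : (4 : ℝ) * (((d : ℤ) + 1) / 4 : ℤ) = d + 1 := by
    exact_mod_cast (by omega : 4 * (((d : ℤ) + 1) / 4) = (d : ℤ) + 1)
  have hsqrt : √(d : ℝ) ^ 2 = d := Real.sq_sqrt (Nat.cast_nonneg d)
  rw [Complex.sq_norm, Complex.normSq_apply]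
  simp only [add_re, add_im, intCast_re, intCast_im, mul_re, mul_im, ωd_re, ωd_im]
  push_cast
  linear_combination n ^ 2 / 4 * hsqrt - n ^ 2 / 4 * hquarter

lemma Tmat_entries_mem_Od_iff {β : ℂ} (hβ : β ∈ Od d) (t : ℝ) :
    (∀ i j, Tmat β t i j ∈ Od d) ↔ Tmat β t 0 2 ∈ Od d := by
  refine ⟨fun h ↦ h 0 2, fun h i j ↦ ?_⟩
  have h0 : (0 : ℂ) ∈ Od d := by exact_mod_cast intCast_mem_Od 0
  have h1 : (1 : ℂ) ∈ Od d := by exact_mod_cast intCast_mem_Od 1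
  fin_cases i <;> fin_cases j
  all_goals first
    | exact h
    | simp [Tmat, h0, h1, hβ, neg_conj_mem_Od hβ]

lemma Tmat_entries_mem_Od_iff_of_mod_four_eq_three (hd : d % 4 = 3) (m n : ℤ) (t : ℝ) :
    (∀ i j, Tmat ((m : ℂ) + (n : ℂ) * ωd d) t i j ∈ Od d) ↔
      ∃ s : ℤ, t = (s : ℝ) * √(d : ℝ) ∧
        s ≡ m ^ 2 + m * n + n ^ 2 * (((d : ℤ) + 1) / 4) [ZMOD 2] := by
  rw [Tmat_entries_mem_Od_iff ⟨m, n, rfl⟩, ← half_corner_mem_Od_iff]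
  simp [Tmat, norm_sq_intCast_add_intCast_mul_ωd hd]

end

theorem heisenberg_translation_lift_three_mod_four_general
    (d : ℕ) (hdmod : d % 4 = 3) :
    (∀ (m n : ℤ) (t : ℝ),
      (∀ i j, Tmat ((m : ℂ) + (n : ℂ) * ωd d) t i j ∈ Od d) ↔
        ∃ s : ℤ, t = (s : ℝ) * √(d : ℝ) ∧
          s ≡ m ^ 2 + m * n + n ^ 2 * (((d : ℤ) + 1) / 4) [ZMOD 2]) ∧
    (∀ β ∈ Od d, ∃ t : ℝ, ∀ i j, Tmat β t i j ∈ Od d) ∧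
    (∀ t : ℝ, (∀ i j, Tmat 0 t i j ∈ Od d) ↔ ∃ k : ℤ, t = 2 * √(d : ℝ) * (k : ℝ)) := by
  have lift := Tmat_entries_mem_Od_iff_of_mod_four_eq_three hdmod
  refine ⟨lift, ?_, fun t ↦ ?_⟩
  · rintro β ⟨m, n, rfl⟩
    exact ⟨_, (lift m n _).2 ⟨_, rfl, .refl _⟩⟩
  · rw [show (0 : ℂ) = ((0 : ℤ) : ℂ) + ((0 : ℤ) : ℂ) * ωd d by simp, lift]
    simp only [zero_pow two_ne_zero, mul_zero, zero_mul, add_zero, Int.modEq_zero_iff_dvd]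
    constructor
    · rintro ⟨_, rfl, k, rfl⟩
      exact ⟨k, by push_cast; ring⟩
    · rintro ⟨k, rfl⟩
      exact ⟨2 * k, by push_cast; ring, dvd_mul_right 2 k⟩

/-- **Lifting of lattice translations, case `d ≡ 3 (mod 4)`** (part (ii) of the proof of
Proposition 3.1): for `β = m + n·ω_d`, the matrix `T(β,t)` has all its entries in `O_d`
iff `t = s√d` with `s ≡ m² + mn + n²(d+1)/4 (mod 2)`; in particular every translation of
`Isom(O_d)` lifts, and the vertical translations that lift are exactly those with
`t ∈ 2√d·ℤ`. -/
theorem heisenberg_translation_lift_three_mod_four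
    (d : ℕ) (hd0 : 0 < d) (hdsf : Squarefree d) (hdmod : d % 4 = 3) :
    (∀ (m n : ℤ) (t : ℝ),
      (∀ i j, Tmat ((m : ℂ) + (n : ℂ) * ωd d) t i j ∈ Od d) ↔
        ∃ s : ℤ, t = (s : ℝ) * √(d : ℝ) ∧
          s ≡ m ^ 2 + m * n + n ^ 2 * (((d : ℤ) + 1) / 4) [ZMOD 2]) ∧
    (∀ β ∈ Od d, ∃ t : ℝ, ∀ i j, Tmat β t i j ∈ Od d) ∧
    (∀ t : ℝ, (∀ i j, Tmat 0 t i j ∈ Od d) ↔ ∃ k : ℤ, t = 2 * √(d : ℝ) * (k : ℝ)) :=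
  heisenberg_translation_lift_three_mod_four_general d hdmod
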